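/- arXiv:math/0412195 — 5 statements merged into one kernel-verified Lean document; each statement's English description precedes it below -/
import Mathlib

section
/- Let λ₁, …, λₙ be vectors spanning ℝ^d, and for t ∈ ℝ^d let M(t) : ℝⁿ → ℝⁿ be the diagonal linear map whose i-th diagonal entry is e^{⟨λᵢ, t⟩} (where ⟨·,·⟩ is the standard inner product on ℝ^d). Suppose V ⊆ ℝⁿ is a subset invariant under every M(t), and suppose there exist a sequence (t_p) in ℝ^d with ‖t_p‖ → ∞ and a sequence (x_p) in V such that x_p converges to some x ∈ V and M(t_p)·x_p converges to some y ∈ V. Then there exists a nonzero vector t₀ ∈ ℝ^d such that for every index i: if ⟨λᵢ, t₀⟩ > 0 then the i-th coordinate of x is 0, and if ⟨λᵢ, t₀⟩ < 0 then the i-th coordinate of y is 0. -/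
open scoped RealInnerProductSpace
open Filter Topology Metric

/-!
Normalize `t p` to the unit sphere and pass to a subsequence along which the directions converge
to some unit vector `t₀`. Since `⟪λᵢ, t p⟫ = ‖t p‖ ⟪λᵢ, t p / ‖t p‖⟫` and `‖t p‖ → ∞`, the exponent
`⟪λᵢ, t p⟫` tends to `+∞` when `⟪λᵢ, t₀⟫ > 0`, which forces the limit `x i` of `xs p i` to vanish
because `exp ⟪λᵢ, t p⟫ * xs p i` stays bounded; symmetrically it tends to `-∞` when
`⟪λᵢ, t₀⟫ < 0`, which forces `y i = 0`.
-/

theorem exists_strictMono_tendsto_normalize_mem_sphere {E : Type*} [NormedAddCommGroup E]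
    [NormedSpace ℝ E] [ProperSpace E] {t : ℕ → E} (ht : Tendsto (‖t ·‖) atTop atTop) :
    ∃ t₀ ∈ sphere (0 : E) 1, ∃ φ : ℕ → ℕ, StrictMono φ ∧
      Tendsto (fun p => ‖t (φ p)‖⁻¹ • t (φ p)) atTop (𝓝 t₀) := by
  have hsphere : ∀ᶠ p in atTop, ‖t p‖⁻¹ • t p ∈ sphere (0 : E) 1 :=
    (ht.eventually_gt_atTop 0).mono fun p hp => by
      rw [mem_sphere_zero_iff_norm, norm_smul, norm_inv, norm_norm, inv_mul_cancel₀ hp.ne']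
  exact (isCompact_sphere (0 : E) 1).tendsto_subseq' hsphere.frequently

section InnerProductSpace

variable {E ι : Type*} [NormedAddCommGroup E] [InnerProductSpace ℝ E]

theorem norm_mul_inner_normalize (l t : E) : ‖t‖ * ⟪l, ‖t‖⁻¹ • t⟫ = ⟪l, t⟫ := by
  rcases eq_or_ne t 0 with rfl | ht
  · simp
  · rw [real_inner_smul_right, ← mul_assoc, mul_inv_cancel₀ (norm_ne_zero_iff.mpr ht), one_mul]

theorem tendsto_inner_atTop_of_tendsto_normalize {f : Filter ι} {t : ι → E} {t₀ l : E}
    (ht : Tendsto (‖t ·‖) f atTop) (hdir : Tendsto (fun p => ‖t p‖⁻¹ • t p) f (𝓝 t₀))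
    (hpos : 0 < ⟪l, t₀⟫) : Tendsto (fun p => ⟪l, t p⟫) f atTop := by
  have hinner := (tendsto_const_nhds (x := l)).inner (𝕜 := ℝ) hdir
  simpa only [norm_mul_inner_normalize] using ht.atTop_mul_pos hpos hinner

theorem tendsto_inner_atBot_of_tendsto_normalize {f : Filter ι} {t : ι → E} {t₀ l : E}
    (ht : Tendsto (‖t ·‖) f atTop) (hdir : Tendsto (fun p => ‖t p‖⁻¹ • t p) f (𝓝 t₀))
    (hneg : ⟪l, t₀⟫ < 0) : Tendsto (fun p => ⟪l, t p⟫) f atBot := by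
  have := tendsto_inner_atTop_of_tendsto_normalize (l := -l) ht hdir
    (by rwa [inner_neg_left, neg_pos])
  simpa only [inner_neg_left, tendsto_neg_atTop_iff] using this

end InnerProductSpace

theorem eq_zero_of_tendsto_exp_mul {ι : Type*} {f : Filter ι} [f.NeBot] {a u : ι → ℝ}
    {u₀ v₀ : ℝ} (ha : Tendsto a f atTop) (hu : Tendsto u f (𝓝 u₀))
    (hv : Tendsto (fun p => Real.exp (a p) * u p) f (𝓝 v₀)) : u₀ = 0 := by
  have hdecay : Tendsto (fun p => Real.exp (-a p)) f (𝓝 0) :=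
    Real.tendsto_exp_atBot.comp (tendsto_neg_atTop_atBot.comp ha)
  have hu0 : Tendsto u f (𝓝 0) := by
    convert hdecay.mul hv using 1
    · ext p
      rw [← mul_assoc, ← Real.exp_add, neg_add_cancel, Real.exp_zero, one_mul]
    · rw [zero_mul]
  exact tendsto_nhds_unique hu hu0

theorem nonproper_diagonal_action_general (d n : ℕ)
    (lam : Fin n → EuclideanSpace ℝ (Fin d))
    (t : ℕ → EuclideanSpace ℝ (Fin d))
    (ht : Filter.Tendsto (fun p => ‖t p‖) Filter.atTop Filter.atTop)
    (xs : ℕ → (Fin n → ℝ))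
    (x y : Fin n → ℝ)
    (hxlim : Filter.Tendsto xs Filter.atTop (nhds x))
    (hylim : Filter.Tendsto (fun p => fun i => Real.exp ⟪lam i, t p⟫ * xs p i)
      Filter.atTop (nhds y)) :
    ∃ t₀ : EuclideanSpace ℝ (Fin d), t₀ ≠ 0 ∧
      ∀ i : Fin n, ((0 : ℝ) < ⟪lam i, t₀⟫ → x i = 0) ∧ (⟪lam i, t₀⟫ < (0 : ℝ) → y i = 0) := by
  obtain ⟨t₀, ht₀, φ, hφ, hdir⟩ := exists_strictMono_tendsto_normalize_mem_sphere ht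
  have hφ' := hφ.tendsto_atTop
  have htφ : Tendsto (fun p => ‖t (φ p)‖) atTop atTop := ht.comp hφ'
  refine ⟨t₀, ne_zero_of_mem_unit_sphere ⟨t₀, ht₀⟩, fun i => ?_⟩
  have hxi := (tendsto_pi_nhds.mp hxlim i).comp hφ'
  have hyi := (tendsto_pi_nhds.mp hylim i).comp hφ'
  refine ⟨fun hpos => ?_, fun hneg => ?_⟩
  · exact eq_zero_of_tendsto_exp_mul
      (tendsto_inner_atTop_of_tendsto_normalize htφ hdir hpos) hxi hyi
  · -- Run the first case backwards: `xs p i = exp (-⟪λᵢ, t p⟫) * (exp ⟪λᵢ, t p⟫ * xs p i)`.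
    refine eq_zero_of_tendsto_exp_mul (a := fun p => -⟪lam i, t (φ p)⟫)
      (tendsto_neg_atBot_atTop.comp (tendsto_inner_atBot_of_tendsto_normalize htφ hdir hneg))
      hyi (hxi.congr fun p => ?_)
    simp only [Function.comp_apply]
    rw [← mul_assoc, ← Real.exp_add, neg_add_cancel, Real.exp_zero, one_mul]

/-- Non-properness of a diagonal abelian action: if vectors `lam i` span `ℝ^d`,
`V ⊆ ℝ^n` is invariant under every diagonal map `M t = diag (exp ⟪lam i, t⟫)`,
and there are sequences `t p → ∞`, `xs p ∈ V` with `xs p → x` and `M (t p) (xs p) → y`,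
then some nonzero `t₀` satisfies: `⟪lam i, t₀⟫ > 0 → x i = 0` and
`⟪lam i, t₀⟫ < 0 → y i = 0`. -/
theorem nonproper_diagonal_action (d n : ℕ)
    (lam : Fin n → EuclideanSpace ℝ (Fin d))
    (hspan : Submodule.span ℝ (Set.range lam) = ⊤)
    (V : Set (Fin n → ℝ))
    (hV : ∀ t : EuclideanSpace ℝ (Fin d), ∀ v ∈ V,
      (fun i => Real.exp ⟪lam i, t⟫ * v i) ∈ V)
    (t : ℕ → EuclideanSpace ℝ (Fin d))
    (ht : Filter.Tendsto (fun p => ‖t p‖) Filter.atTop Filter.atTop)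
    (xs : ℕ → (Fin n → ℝ)) (hxs : ∀ p, xs p ∈ V)
    (x y : Fin n → ℝ) (hx : x ∈ V) (hy : y ∈ V)
    (hxlim : Filter.Tendsto xs Filter.atTop (nhds x))
    (hylim : Filter.Tendsto (fun p => fun i => Real.exp ⟪lam i, t p⟫ * xs p i)
      Filter.atTop (nhds y)) :
    ∃ t₀ : EuclideanSpace ℝ (Fin d), t₀ ≠ 0 ∧
      ∀ i : Fin n, ((0 : ℝ) < ⟪lam i, t₀⟫ → x i = 0) ∧ (⟪lam i, t₀⟫ < (0 : ℝ) → y i = 0) :=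
  nonproper_diagonal_action_general d n lam t ht xs x y hxlim hylim
end

section
/- Let n ≥ 2, let J = diag(−1, 1, …, 1) and η(x,y) = xᵀ J y be the Minkowski bilinear form on ℝ^{n+1}. Let B : ℝ^{n+1} × ℝ^{n+1} → ℝ be an alternating (antisymmetric) bilinear form such that B(gx, gy) = B(x,y) for every linear map g : ℝ^{n+1} → ℝ^{n+1} with η(gx,gy) = η(x,y) for all x,y and det g = 1. Then B = 0. -/
open Matrix

/-- The Minkowski matrix `diag (-1, 1, ..., 1)` on `ℝ^{n+1}`. -/
noncomputable def minkMat (n : ℕ) : Matrix (Fin (n + 1)) (Fin (n + 1)) ℝ :=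
  Matrix.diagonal (fun i => if i = 0 then (-1 : ℝ) else 1)

/-- The Minkowski bilinear form `η(x, y) = xᵀ J y` of signature `(1, n)`. -/
noncomputable def minkForm (n : ℕ) (x y : Fin (n + 1) → ℝ) : ℝ :=
  x ⬝ᵥ (minkMat n).mulVec y

/-- An alternating bilinear form on Minkowski space `ℝ^{1,n}`, `n ≥ 2`, invariant under
all special Lorentz transformations, is zero. -/
theorem alternating_bilinear_lorentz_invariant_eq_zero (n : ℕ) (hn : 2 ≤ n)
    (B : (Fin (n + 1) → ℝ) →ₗ[ℝ] (Fin (n + 1) → ℝ) →ₗ[ℝ] ℝ)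
    (halt : ∀ x y : Fin (n + 1) → ℝ, B x y = - B y x)
    (hinv : ∀ g : (Fin (n + 1) → ℝ) →ₗ[ℝ] (Fin (n + 1) → ℝ),
      (∀ x y : Fin (n + 1) → ℝ, minkForm n (g x) (g y) = minkForm n x y) →
      LinearMap.det g = 1 →
      ∀ x y : Fin (n + 1) → ℝ, B (g x) (g y) = B x y) :
    B = 0 := by
  have key : ∀ i j : Fin (n + 1), B (Pi.single i 1) (Pi.single j 1) = 0 := by
    intro i j
    by_cases hij : i = j
    · subst hij
      have := halt (Pi.single i 1) (Pi.single i 1)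
      linarith
    · obtain ⟨c, hci, hcj⟩ : ∃ c : Fin (n + 1), c ≠ i ∧ c ≠ j := by
        have hne : ({i, j}ᶜ : Finset (Fin (n + 1))).Nonempty := by
          rw [← Finset.card_pos, Finset.card_compl]
          have h2 : ({i, j} : Finset (Fin (n + 1))).card ≤ 2 :=
            (Finset.card_insert_le _ _).trans (by simp)
          have : Fintype.card (Fin (n + 1)) = n + 1 := by simp
          omega
        obtain ⟨c, hc⟩ := hne
        simp only [Finset.mem_compl, Finset.mem_insert, Finset.mem_singleton, not_or] at hc
        exact ⟨c, hc.1, hc.2⟩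
      set ε : Fin (n + 1) → ℝ := fun k => if k = j ∨ k = c then -1 else 1 with hεdef
      have hε2 : ∀ k, ε k * ε k = 1 := by
        intro k
        by_cases h : k = j ∨ k = c <;> simp [hεdef, h]
      set g := Matrix.toLin' (Matrix.diagonal ε) with hg
      have hgx : ∀ x, g x = fun k => ε k * x k := by
        intro x
        funext k
        simp [hg, Matrix.toLin'_apply, Matrix.mulVec_diagonal]
      have hη : ∀ x y : Fin (n + 1) → ℝ, minkForm n (g x) (g y) = minkForm n x y := by
        intro x y
        simp only [hgx, minkForm, minkMat, Matrix.mulVec_diagonal, dotProduct]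
        apply Finset.sum_congr rfl
        intro k _
        by_cases h : k = j ∨ k = c
        · simp only [hεdef, if_pos h]
          split_ifs <;> ring
        · simp only [hεdef, if_neg h]
          split_ifs <;> ring
      have hdet : LinearMap.det g = 1 := by
        rw [hg, LinearMap.det_toLin', Matrix.det_diagonal]
        rw [← Finset.mul_prod_erase _ _ (Finset.mem_univ j),
          ← Finset.mul_prod_erase _ _ (Finset.mem_erase.mpr ⟨hcj, Finset.mem_univ c⟩)]
        have h1 : ε j = -1 := by simp [hεdef]
        have h2 : ε c = -1 := by simp [hεdef]
        have h3 : ∏ k ∈ (Finset.univ.erase j).erase c, ε k = 1 := by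
          apply Finset.prod_eq_one
          intro k hk
          simp only [Finset.mem_erase] at hk
          simp [hεdef, hk.1, hk.2.1]
        rw [h1, h2, h3]; ring
      have hgi : g (Pi.single i 1) = Pi.single i 1 := by
        rw [hgx]
        funext k
        by_cases h : k = i
        · subst h
          have hne : ¬(k = j ∨ k = c) := by
            rintro (h' | h')
            · exact hij h'
            · exact hci h'.symm
          simp [hεdef, hne]
        · simp [Pi.single_eq_of_ne h]
      have hgj : g (Pi.single j 1) = -(Pi.single j 1) := by
        rw [hgx]
        funext k
        by_cases h : k = j
        · subst h
          simp [hεdef]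
        · simp [Pi.single_eq_of_ne h]
      have h := hinv g hη hdet (Pi.single i 1) (Pi.single j 1)
      rw [hgi, hgj, map_neg] at h
      linarith
  apply (Pi.basisFun ℝ (Fin (n + 1))).ext
  intro i
  apply (Pi.basisFun ℝ (Fin (n + 1))).ext
  intro j
  simpa [Pi.basisFun_apply] using key i j
end

section
/- Let G be a compact Hausdorff topological group and let φ : ℝ → G be a continuous group homomorphism. Suppose that for every s > 0 the element φ(s) is conjugate in G to φ(1). Then φ(t) = 1 for all t ∈ ℝ. -/
/-!
Conjugacy classes in a compact Hausdorff group are compact, hence closed. The conjugates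
`φ s` of `φ 1` tend to `φ 0 = 1` as `s → 0⁺`, so `1` is conjugate to `φ 1`, i.e. `φ 1 = 1`.
Then every `φ s` with `s > 0` is a conjugate of `1`, and `φ (-s) = (φ s)⁻¹` handles `s < 0`.
-/

open Filter Topology

theorem isClosed_conjugatesOf {G : Type*} [Group G] [TopologicalSpace G] [IsTopologicalGroup G]
    [CompactSpace G] [T2Space G] (a : G) : IsClosed (conjugatesOf a) := by
  have hrange : conjugatesOf a = Set.range fun c : G => c * a * c⁻¹ := by
    ext b
    exact isConj_iff
  rw [hrange]
  exact (isCompact_range (by fun_prop)).isClosed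

theorem map_zero_eq_one_of_map_add {A G : Type*} [AddGroup A] [Group G] {φ : A → G}
    (hhom : ∀ s t, φ (s + t) = φ s * φ t) : φ 0 = 1 := by
  have h := hhom 0 0
  rw [add_zero] at h
  exact mul_eq_left.mp h.symm

theorem eq_one_of_map_add_of_forall_pos {A G : Type*} [AddCommGroup A] [LinearOrder A]
    [IsOrderedAddMonoid A] [Group G] {φ : A → G} (hhom : ∀ s t, φ (s + t) = φ s * φ t)
    (hpos : ∀ s, 0 < s → φ s = 1) (t : A) : φ t = 1 := by
  rcases lt_trichotomy t 0 with ht | rfl | ht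
  · have h := hhom t (-t)
    rwa [add_neg_cancel, map_zero_eq_one_of_map_add hhom, hpos (-t) (neg_pos.mpr ht),
      mul_one, eq_comm] at h
  · exact map_zero_eq_one_of_map_add hhom
  · exact hpos t ht

/-- A continuous one-parameter subgroup of a compact Hausdorff group all of whose
elements `φ s`, `s > 0`, are conjugate to `φ 1`, is trivial. -/
theorem one_parameter_all_conjugate_in_compact_group_trivial
    {G : Type*} [Group G] [TopologicalSpace G] [IsTopologicalGroup G]
    [CompactSpace G] [T2Space G]
    (φ : ℝ → G) (hhom : ∀ s t : ℝ, φ (s + t) = φ s * φ t) (hcont : Continuous φ)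
    (hconj : ∀ s : ℝ, 0 < s → ∃ g : G, g * φ 1 * g⁻¹ = φ s) :
    ∀ t : ℝ, φ t = 1 := by
  have hconj' : ∀ s : ℝ, 0 < s → φ s ∈ conjugatesOf (φ 1) := fun s hs =>
    isConj_iff.mpr (hconj s hs)
  have htendsto : Tendsto φ (𝓝[>] 0) (𝓝 1) := by
    rw [← map_zero_eq_one_of_map_add hhom]
    exact (hcont.tendsto 0).mono_left nhdsWithin_le_nhds
  have hone_mem : (1 : G) ∈ conjugatesOf (φ 1) :=
    (isClosed_conjugatesOf (φ 1)).closure_subset <|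
      mem_closure_of_tendsto htendsto (eventually_nhdsWithin_of_forall hconj')
  have hφ1 : φ 1 = 1 := isConj_one_left.mp hone_mem
  refine eq_one_of_map_add_of_forall_pos hhom fun s hs => ?_
  have h := hconj' s hs
  rw [hφ1] at h
  exact isConj_one_right.mp h
end

section
/- Let n ≥ 1, let J = diag(−1, 1, …, 1) and η(x,y) = xᵀ J y be the Minkowski bilinear form on ℝ^{n+1}. Let K be a compact subgroup of GL(ℝ^{n+1}) such that every g ∈ K satisfies η(gx, gy) = η(x,y) for all x, y. Then there exists a linear subspace W of ℝ^{n+1} with W ≠ 0 and W ≠ ℝ^{n+1} that is invariant under every element of K. In particular, a precompact group of Lorentz transformations never acts irreducibly on ℝ^{n+1}. -/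
open Matrix

/-!
A compact group `K` of matrices preserves a positive definite form `P`, obtained by averaging
`gᵀ g` over the Haar measure of `K`. If `K` also preserves the Minkowski form `J`, it preserves
`J - c P` for every scalar `c`, hence also the kernel of `J - c P`. Choosing `c` a root of
`det (J - c P)`, which is real because `J` is symmetric and `P` positive definite, makes this
kernel nonzero; it is not everything because `J` is indefinite while `c P` is semidefinite.
-/

open MeasureTheory

theorem LinearMap.map_integral {X E F : Type*} [MeasurableSpace X] {μ : Measure X}
    [NormedAddCommGroup E] [NormedSpace ℝ E] [FiniteDimensional ℝ E]
    [NormedAddCommGroup F] [NormedSpace ℝ F] [CompleteSpace F] (L : E →ₗ[ℝ] F) {f : X → E}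
    (hf : Integrable f μ) :
    L (∫ x, f x ∂μ) = ∫ x, L (f x) ∂μ :=
  (L.toContinuousLinearMap.integral_comp_comm hf).symm

namespace Matrix

variable {ι : Type*} [Fintype ι] [DecidableEq ι]

theorem transpose_mul_mul_eq_of_dotProduct_mulVec {R : Type*} [CommRing R]
    {A M : Matrix ι ι R} (h : ∀ x y, (A *ᵥ x) ⬝ᵥ M *ᵥ (A *ᵥ y) = x ⬝ᵥ M *ᵥ y) :
    Aᵀ * M * A = M := by
  refine (toLinearMap₂' R (S₁ := R) (S₂ := R) (N₂ := R)).injective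
    (LinearMap.ext fun x => LinearMap.ext fun y => ?_)
  rw [toLinearMap₂'_apply', toLinearMap₂'_apply', ← h, ← mulVec_mulVec, ← mulVec_mulVec,
    dotProduct_mulVec, vecMul_transpose]

theorem mulVec_mulVec_eq_zero_of_transpose_mul_mul_eq {R : Type*} [CommRing R]
    {X : Matrix ι ι R} {g : GL ι R} (hg : (g : Matrix ι ι R)ᵀ * X * g = X) {w : ι → R}
    (hw : X *ᵥ w = 0) : X *ᵥ (g *ᵥ w) = 0 := by
  have hXg : X * g = (↑g⁻¹ : Matrix ι ι R)ᵀ * X := by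
    conv_rhs => rw [← hg]
    rw [← Matrix.mul_assoc, ← Matrix.mul_assoc, ← transpose_mul, g.mul_inv, transpose_one,
      Matrix.one_mul]
  rw [mulVec_mulVec, hXg, ← mulVec_mulVec, hw, mulVec_zero]

section Averaging

open scoped Matrix.Norms.L2Operator

theorem dotProduct_integral_mulVec {X : Type*} [MeasurableSpace X] {μ : Measure X}
    {f : X → Matrix ι ι ℝ} (hf : Integrable f μ) (x y : ι → ℝ) :
    x ⬝ᵥ (∫ a, f a ∂μ) *ᵥ y = ∫ a, x ⬝ᵥ f a *ᵥ y ∂μ := by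
  simpa [toLinearMap₂'_apply'] using (LinearMap.applyₗ y ∘ₗ LinearMap.applyₗ x ∘ₗ
    (toLinearMap₂' ℝ (S₁ := ℝ) (S₂ := ℝ) (N₂ := ℝ)).toLinearMap).map_integral hf

theorem exists_posDef_transpose_mul_mul_eq_of_isCompact (K : Subgroup (GL ι ℝ))
    (hK : IsCompact (K : Set (GL ι ℝ))) :
    ∃ P : Matrix ι ι ℝ, P.PosDef ∧ ∀ g ∈ K, (g : Matrix ι ι ℝ)ᵀ * P * g = P := by
  have : CompactSpace K := isCompact_iff_compactSpace.mp hK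
  borelize ↥K
  let μ : Measure K := Measure.haar.inv
  let M : K → Matrix ι ι ℝ := fun g => ((g : GL ι ℝ) : Matrix ι ι ℝ)
  have hM : Continuous M := by fun_prop
  let f : K → Matrix ι ι ℝ := fun g => (M g)ᵀ * M g
  have hfi : Integrable f μ :=
    (hM.matrix_transpose.matrix_mul hM).integrable_of_hasCompactSupport (.of_compactSpace f)
  refine ⟨∫ g, f g ∂μ, .of_dotProduct_mulVec_pos ?_ fun x hx => ?_, fun a ha => ?_⟩
  · rw [IsHermitian, conjTranspose_eq_transpose_of_trivial]
    calc (∫ g, f g ∂μ)ᵀ = ∫ g, (f g)ᵀ ∂μ :=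
          (transposeLinearEquiv ι ι ℝ ℝ).toLinearMap.map_integral hfi
      _ = ∫ g, f g ∂μ := by simp only [f, transpose_mul, transpose_transpose]
  · have hfx : ∀ g, x ⬝ᵥ f g *ᵥ x = M g *ᵥ x ⬝ᵥ M g *ᵥ x := fun g => by
      rw [← mulVec_mulVec, dotProduct_mulVec, vecMul_transpose]
    have hcont : Continuous fun g => x ⬝ᵥ f g *ᵥ x := by
      simp only [hfx]
      fun_prop
    rw [star_trivial, dotProduct_integral_mulVec hfi]
    refine integral_pos_of_integrable_nonneg_nonzero (x := 1) hcont
      (hcont.integrable_of_hasCompactSupport (.of_compactSpace _))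
      (fun g => by simpa [hfx] using dotProduct_star_self_nonneg (M g *ᵥ x)) ?_
    simpa [hfx, M, dotProduct_self_eq_zero] using hx
  · calc (a : Matrix ι ι ℝ)ᵀ * (∫ g, f g ∂μ) * a
        = ∫ g, (a : Matrix ι ι ℝ)ᵀ * f g * a ∂μ := by
          rw [integral_mul_const_of_integrable (hfi.const_mul _),
            integral_const_mul_of_integrable hfi]
      _ = ∫ g, f (g * ⟨a, ha⟩) ∂μ := by
          simp only [f, M, Subgroup.coe_mul, Units.val_mul, transpose_mul, Matrix.mul_assoc]
      _ = ∫ g, f g ∂μ := integral_mul_right_eq_self f _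

end Averaging

theorem IsHermitian.exists_mulVec_eq_smul {𝕜 : Type*} [RCLike 𝕜] [Nonempty ι]
    {A : Matrix ι ι 𝕜} (hA : A.IsHermitian) :
    ∃ (c : ℝ) (v : ι → 𝕜), v ≠ 0 ∧ A *ᵥ v = c • v := by
  obtain ⟨i⟩ := ‹Nonempty ι›
  exact ⟨hA.eigenvalues i, _,
    (WithLp.ofLp_eq_zero 2).ne.2 <| hA.eigenvectorBasis.orthonormal.ne_zero i,
    hA.mulVec_eigenvectorBasis i⟩

open scoped MatrixOrder in
theorem IsHermitian.exists_mulVec_eq_smul_mulVec_of_posDef [Nonempty ι] {J P : Matrix ι ι ℝ}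
    (hJ : J.IsHermitian) (hP : P.PosDef) :
    ∃ (c : ℝ) (v : ι → ℝ), v ≠ 0 ∧ J *ᵥ v = c • P *ᵥ v := by
  obtain ⟨S, hS⟩ : IsUnit (CFC.sqrt P) := hP.isStrictlyPositive.sqrt.isUnit
  have hSS : (S : Matrix ι ι ℝ)ᴴ * S = P := by
    rw [hS, (CFC.sqrt_nonneg P).posSemidef.1.eq, CFC.sqrt_mul_sqrt_self P hP.posSemidef.nonneg]
  have hS' : (S : Matrix ι ι ℝ)ᴴ * (↑S⁻¹ : Matrix ι ι ℝ)ᴴ = 1 := by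
    rw [← conjTranspose_mul, S.inv_mul, conjTranspose_one]
  obtain ⟨c, u, hu, hNu⟩ :=
    (isHermitian_conjTranspose_mul_mul (↑S⁻¹ : Matrix ι ι ℝ) hJ).exists_mulVec_eq_smul
  refine ⟨c, (↑S⁻¹ : Matrix ι ι ℝ) *ᵥ u, fun h => hu ?_, ?_⟩
  · rw [← one_mulVec u, ← S.mul_inv, ← mulVec_mulVec, h, mulVec_zero]
  · calc J *ᵥ (↑S⁻¹ *ᵥ u) = (S : Matrix ι ι ℝ)ᴴ *ᵥ ((↑S⁻¹)ᴴ * J * ↑S⁻¹) *ᵥ u := by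
          rw [mulVec_mulVec, mulVec_mulVec, ← Matrix.mul_assoc, ← Matrix.mul_assoc, hS',
            Matrix.one_mul]
      _ = c • P *ᵥ (↑S⁻¹ *ᵥ u) := by
          rw [hNu, mulVec_smul, ← hSS, mulVec_mulVec, Matrix.mul_assoc, S.mul_inv, Matrix.mul_one]

end Matrix

theorem isHermitian_minkMat (n : ℕ) : (minkMat n).IsHermitian :=
  isHermitian_diagonal _

theorem minkMat_ne_smul_of_posDef {n : ℕ} (hn : 1 ≤ n)
    {P : Matrix (Fin (n + 1)) (Fin (n + 1)) ℝ} (hP : P.PosDef) (c : ℝ) :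
    minkMat n ≠ c • P := by
  intro h
  have h₀ := congrFun₂ h 0 0
  have h₁ := congrFun₂ h ⟨1, by omega⟩ ⟨1, by omega⟩
  rw [minkMat, diagonal_apply_eq, if_pos rfl, Matrix.smul_apply, smul_eq_mul] at h₀
  rw [minkMat, diagonal_apply_eq, if_neg (by simp [Fin.ext_iff]), Matrix.smul_apply,
    smul_eq_mul] at h₁
  nlinarith [hP.diag_pos (i := 0), hP.diag_pos (i := ⟨1, by omega⟩)]

/-- A compact group of Lorentz transformations of `ℝ^{1,n}` never acts irreducibly:
it preserves a nontrivial proper subspace. -/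
theorem compact_lorentz_subgroup_not_irreducible (n : ℕ) (hn : 1 ≤ n)
    (K : Subgroup (GL (Fin (n + 1)) ℝ))
    (hcpt : IsCompact (K : Set (GL (Fin (n + 1)) ℝ)))
    (hK : ∀ g ∈ K, ∀ x y : Fin (n + 1) → ℝ,
      minkForm n ((g : Matrix (Fin (n + 1)) (Fin (n + 1)) ℝ).mulVec x)
        ((g : Matrix (Fin (n + 1)) (Fin (n + 1)) ℝ).mulVec y) = minkForm n x y) :
    ∃ W : Submodule ℝ (Fin (n + 1) → ℝ), W ≠ ⊥ ∧ W ≠ ⊤ ∧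
      ∀ g ∈ K, ∀ w ∈ W, (g : Matrix (Fin (n + 1)) (Fin (n + 1)) ℝ).mulVec w ∈ W := by
  obtain ⟨P, hP, hPK⟩ := exists_posDef_transpose_mul_mul_eq_of_isCompact K hcpt
  obtain ⟨c, v, hv, hJv⟩ := (isHermitian_minkMat n).exists_mulVec_eq_smul_mulVec_of_posDef hP
  set X := minkMat n - c • P
  have hXK : ∀ g ∈ K, (g : Matrix (Fin (n + 1)) (Fin (n + 1)) ℝ)ᵀ * X * g = X := by
    intro g hg
    rw [Matrix.mul_sub, Matrix.sub_mul, Matrix.mul_smul, Matrix.smul_mul, hPK g hg,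
      transpose_mul_mul_eq_of_dotProduct_mulVec (hK g hg)]
  refine ⟨LinearMap.ker (toLin' X), (Submodule.ne_bot_iff _).2 ⟨v, ?_, hv⟩, ?_,
    fun g hg w hw => ?_⟩
  · rw [LinearMap.mem_ker, toLin'_apply, sub_mulVec, hJv, smul_mulVec, sub_self]
  · rw [Ne, LinearMap.ker_eq_top, LinearEquiv.map_eq_zero_iff, sub_eq_zero]
    exact minkMat_ne_smul_of_posDef hn hP c
  · rw [LinearMap.mem_ker, toLin'_apply] at hw ⊢
    exact mulVec_mulVec_eq_zero_of_transpose_mul_mul_eq (hXK g hg) hw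
end

section
/- Let n ≥ 2, let J = diag(−1, 1, …, 1) and η(x,y) = xᵀ J y be the Minkowski bilinear form on ℝ^{n+1}. Let B : ℝ^{n+1} × ℝ^{n+1} → ℝ be a symmetric bilinear form such that B(gx, gy) = B(x,y) for every linear map g : ℝ^{n+1} → ℝ^{n+1} with η(gx, gy) = η(x,y) for all x, y. Then there exists a real constant c such that B = c · η. -/
open Matrix

namespace LorentzAux

lemma mink_apply (n : ℕ) (x y : Fin (n + 1) → ℝ) :
    minkForm n x y = ∑ k, x k * ((if k = 0 then (-1 : ℝ) else 1) * y k) := by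
  simp [minkForm, minkMat, Matrix.mulVec_diagonal, dotProduct]

/-- Sign flip of coordinate `k`. -/
def flipMap (n : ℕ) (k : Fin (n + 1)) : (Fin (n + 1) → ℝ) →ₗ[ℝ] (Fin (n + 1) → ℝ) where
  toFun x := fun i => if i = k then -x i else x i
  map_add' x y := by
    funext i
    by_cases h : i = k
    · simp only [Pi.add_apply, if_pos h]; ring
    · simp only [Pi.add_apply, if_neg h]
  map_smul' c x := by
    funext i
    by_cases h : i = k
    · simp only [Pi.smul_apply, if_pos h, smul_eq_mul, RingHom.id_apply]; ring
    · simp only [Pi.smul_apply, if_neg h, smul_eq_mul, RingHom.id_apply]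

lemma flip_lorentz (n : ℕ) (k : Fin (n + 1)) (x y : Fin (n + 1) → ℝ) :
    minkForm n (flipMap n k x) (flipMap n k y) = minkForm n x y := by
  rw [mink_apply, mink_apply]
  refine Finset.sum_congr rfl fun i _ => ?_
  simp only [flipMap, LinearMap.coe_mk, AddHom.coe_mk]
  by_cases h : i = k
  · rw [if_pos h, if_pos h]; ring
  · rw [if_neg h, if_neg h]

lemma flip_single_self (n : ℕ) (k : Fin (n + 1)) :
    flipMap n k (Pi.single k 1) = -(Pi.single k (1 : ℝ)) := by
  funext i
  simp only [flipMap, LinearMap.coe_mk, AddHom.coe_mk, Pi.neg_apply]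
  by_cases h : i = k
  · rw [if_pos h]
  · rw [if_neg h, Pi.single_eq_of_ne h, neg_zero]

lemma flip_single_ne (n : ℕ) (k j : Fin (n + 1)) (h : j ≠ k) :
    flipMap n k (Pi.single j 1) = Pi.single j (1 : ℝ) := by
  funext i
  simp only [flipMap, LinearMap.coe_mk, AddHom.coe_mk]
  by_cases hik : i = k
  · rw [if_pos hik, hik, Pi.single_eq_of_ne (Ne.symm h), neg_zero]
  · rw [if_neg hik]

/-- Precomposition with a permutation. -/
def permMap (n : ℕ) (σ : Equiv.Perm (Fin (n + 1))) :
    (Fin (n + 1) → ℝ) →ₗ[ℝ] (Fin (n + 1) → ℝ) where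
  toFun x := x ∘ σ
  map_add' _ _ := rfl
  map_smul' _ _ := rfl

lemma swap_lorentz (n : ℕ) (a b : Fin (n + 1)) (ha : a ≠ 0) (hb : b ≠ 0)
    (x y : Fin (n + 1) → ℝ) :
    minkForm n (permMap n (Equiv.swap a b) x) (permMap n (Equiv.swap a b) y)
      = minkForm n x y := by
  rw [mink_apply, mink_apply]
  refine Fintype.sum_equiv (Equiv.swap a b) _ _ fun i => ?_
  have h0 : Equiv.swap a b 0 = 0 := Equiv.swap_apply_of_ne_of_ne ha.symm hb.symm
  have hiff : (i = 0) ↔ (Equiv.swap a b i = 0) := by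
    constructor
    · rintro rfl; exact h0
    · intro h; exact (Equiv.swap a b).injective (h.trans h0.symm)
  simp only [permMap, LinearMap.coe_mk, AddHom.coe_mk, Function.comp]
  by_cases h : i = 0
  · rw [if_pos h, if_pos (hiff.mp h)]
  · rw [if_neg h, if_neg (fun hc => h (hiff.mpr hc))]

lemma swap_single (n : ℕ) (a b : Fin (n + 1)) :
    permMap n (Equiv.swap a b) (Pi.single a 1) = Pi.single b (1 : ℝ) := by
  funext k
  simp only [permMap, LinearMap.coe_mk, AddHom.coe_mk, Function.comp, Pi.single_apply]
  have : (Equiv.swap a b k = a) ↔ (k = b) := by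
    rw [Equiv.apply_eq_iff_eq_symm_apply, Equiv.symm_swap, Equiv.swap_apply_left]
  simp [this]

/-- A hyperbolic boost in the `(0,1)` plane. -/
noncomputable def boostMap (n : ℕ) : (Fin (n + 1) → ℝ) →ₗ[ℝ] (Fin (n + 1) → ℝ) where
  toFun x := fun i =>
    if i = 0 then Real.cosh 1 * x 0 + Real.sinh 1 * x 1
    else if i = 1 then Real.sinh 1 * x 0 + Real.cosh 1 * x 1
    else x i
  map_add' x y := by
    funext i
    by_cases h : i = 0
    · simp only [Pi.add_apply, if_pos h]; ring
    · by_cases h1 : i = 1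
      · simp only [Pi.add_apply, if_neg h, if_pos h1]; ring
      · simp only [Pi.add_apply, if_neg h, if_neg h1]
  map_smul' c x := by
    funext i
    by_cases h : i = 0
    · simp only [Pi.smul_apply, if_pos h, smul_eq_mul, RingHom.id_apply]; ring
    · by_cases h1 : i = 1
      · simp only [Pi.smul_apply, if_neg h, if_pos h1, smul_eq_mul, RingHom.id_apply]; ring
      · simp only [Pi.smul_apply, if_neg h, if_neg h1, smul_eq_mul, RingHom.id_apply]

lemma boost_apply_zero (n : ℕ) (x : Fin (n + 1) → ℝ) :
    boostMap n x 0 = Real.cosh 1 * x 0 + Real.sinh 1 * x 1 := by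
  simp [boostMap]

lemma boost_apply_one (n : ℕ) (h01 : (0 : Fin (n + 1)) ≠ 1) (x : Fin (n + 1) → ℝ) :
    boostMap n x 1 = Real.sinh 1 * x 0 + Real.cosh 1 * x 1 := by
  simp only [boostMap, LinearMap.coe_mk, AddHom.coe_mk, if_neg h01.symm]
  simp

lemma boost_apply_other (n : ℕ) (x : Fin (n + 1) → ℝ) (i : Fin (n + 1))
    (h : i ≠ 0) (h1 : i ≠ 1) : boostMap n x i = x i := by
  simp only [boostMap, LinearMap.coe_mk, AddHom.coe_mk]
  rw [if_neg h, if_neg h1]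

lemma boost_lorentz (n : ℕ) (h01 : (0 : Fin (n + 1)) ≠ 1) (x y : Fin (n + 1) → ℝ) :
    minkForm n (boostMap n x) (boostMap n y) = minkForm n x y := by
  rw [mink_apply, mink_apply]
  rw [← sub_eq_zero, ← Finset.sum_sub_distrib]
  set c := Real.cosh 1 with hc
  set s := Real.sinh 1 with hs
  have hcs : c ^ 2 - s ^ 2 = 1 := Real.cosh_sq_sub_sinh_sq 1
  set f : Fin (n + 1) → ℝ := fun i =>
    boostMap n x i * ((if i = 0 then (-1 : ℝ) else 1) * boostMap n y i)
      - x i * ((if i = 0 then (-1 : ℝ) else 1) * y i) with hf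
  have hsub : ∑ i ∈ ({0, 1} : Finset (Fin (n + 1))), f i = ∑ i, f i := by
    refine Finset.sum_subset (Finset.subset_univ _) fun i _ hi => ?_
    simp only [Finset.mem_insert, Finset.mem_singleton, not_or] at hi
    simp only [hf, boost_apply_other n x i hi.1 hi.2, boost_apply_other n y i hi.1 hi.2,
      sub_self]
  rw [← hsub, Finset.sum_pair h01]
  have hf0 : f 0 = -(boostMap n x 0 * boostMap n y 0) + x 0 * y 0 := by
    simp only [hf]
    norm_num
  have hf1 : f 1 = boostMap n x 1 * boostMap n y 1 - x 1 * y 1 := by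
    simp only [hf, if_neg h01.symm]
    ring
  rw [hf0, hf1, boost_apply_zero n x, boost_apply_zero n y,
    boost_apply_one n h01 x, boost_apply_one n h01 y, ← hc, ← hs]
  linear_combination (x 1 * y 1 - x 0 * y 0) * hcs

lemma boost_single_zero (n : ℕ) (h01 : (0 : Fin (n + 1)) ≠ 1) :
    boostMap n (Pi.single 0 1)
      = ((Real.cosh 1 • (Pi.single (0 : Fin (n + 1)) (1 : ℝ) : Fin (n + 1) → ℝ)
        + Real.sinh 1 • (Pi.single (1 : Fin (n + 1)) (1 : ℝ) : Fin (n + 1) → ℝ)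
          : Fin (n + 1) → ℝ)) := by
  have h10 : (1 : Fin (n + 1)) ≠ 0 := h01.symm
  funext i
  simp only [Pi.add_apply, Pi.smul_apply, smul_eq_mul]
  by_cases h : i = 0
  · subst h
    rw [boost_apply_zero]
    simp only [Pi.single_eq_same, Pi.single_eq_of_ne h10, Pi.single_eq_of_ne h01]
  · by_cases h1 : i = 1
    · subst h1
      rw [boost_apply_one n h01]
      simp only [Pi.single_eq_same, Pi.single_eq_of_ne h10, Pi.single_eq_of_ne h01]
      ring
    · rw [boost_apply_other n _ i h h1]
      simp only [Pi.single_eq_of_ne h, Pi.single_eq_of_ne h1]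
      ring

end LorentzAux

open LorentzAux in
/-- A symmetric bilinear form on `ℝ^{1,n}`, `n ≥ 2`, invariant under all Lorentz
transformations, is a constant multiple of the Minkowski form. -/
theorem symmetric_bilinear_lorentz_invariant_is_multiple (n : ℕ) (hn : 2 ≤ n)
    (B : (Fin (n + 1) → ℝ) →ₗ[ℝ] (Fin (n + 1) → ℝ) →ₗ[ℝ] ℝ)
    (hsymm : ∀ x y : Fin (n + 1) → ℝ, B x y = B y x)
    (hinv : ∀ g : (Fin (n + 1) → ℝ) →ₗ[ℝ] (Fin (n + 1) → ℝ),
      (∀ x y : Fin (n + 1) → ℝ, minkForm n (g x) (g y) = minkForm n x y) →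
      ∀ x y : Fin (n + 1) → ℝ, B (g x) (g y) = B x y) :
    ∃ c : ℝ, ∀ x y : Fin (n + 1) → ℝ, B x y = c * minkForm n x y := by
  have h01 : (0 : Fin (n + 1)) ≠ 1 := by
    have hv : ((1 : Fin (n + 1)) : ℕ) = 1 := by
      rw [Fin.val_one', Nat.mod_eq_of_lt (by omega)]
    intro h
    have := congrArg Fin.val h
    rw [Fin.val_zero, hv] at this
    exact one_ne_zero this.symm
  have h10 : (1 : Fin (n + 1)) ≠ 0 := h01.symm
  -- off-diagonal entries vanish
  have hoff : ∀ i j : Fin (n + 1), i ≠ j →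
      B (Pi.single i 1) (Pi.single j 1) = 0 := by
    intro i j hij
    have key := hinv (flipMap n i) (flip_lorentz n i) (Pi.single i 1) (Pi.single j 1)
    rw [flip_single_self, flip_single_ne n i j (Ne.symm hij)] at key
    rw [map_neg, LinearMap.neg_apply] at key
    linarith
  -- spatial diagonal entries agree
  have hspace : ∀ i j : Fin (n + 1), i ≠ 0 → j ≠ 0 →
      B (Pi.single i 1) (Pi.single i 1) = B (Pi.single j 1) (Pi.single j 1) := by
    intro i j hi hj
    have key := hinv (permMap n (Equiv.swap i j)) (swap_lorentz n i j hi hj)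
      (Pi.single i 1) (Pi.single i 1)
    rw [swap_single] at key
    exact key.symm
  -- boost relation
  have hboost : B (Pi.single (0 : Fin (n + 1)) 1) (Pi.single (0 : Fin (n + 1)) 1)
      = -(B (Pi.single (1 : Fin (n + 1)) 1) (Pi.single (1 : Fin (n + 1)) 1)) := by
    have key := hinv (boostMap n) (boost_lorentz n h01)
      (Pi.single (0 : Fin (n + 1)) 1) (Pi.single (0 : Fin (n + 1)) 1)
    rw [boost_single_zero n h01] at key
    set c := Real.cosh 1 with hc
    set s := Real.sinh 1 with hs
    have hcs : c ^ 2 - s ^ 2 = 1 := Real.cosh_sq_sub_sinh_sq 1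
    have hsne : s ≠ 0 := by
      have : (0 : ℝ) < s := Real.sinh_pos_iff.mpr one_pos
      linarith
    simp only [map_add, _root_.map_smul, LinearMap.add_apply, LinearMap.smul_apply,
      smul_eq_mul] at key
    rw [hoff 1 0 h10, hoff 0 1 h01] at key
    have hkey : s ^ 2 * (B (Pi.single (0 : Fin (n + 1)) 1) (Pi.single (0 : Fin (n + 1)) 1)
        + B (Pi.single (1 : Fin (n + 1)) 1) (Pi.single (1 : Fin (n + 1)) 1)) = 0 := by
      linear_combination key
        - B (Pi.single (0 : Fin (n + 1)) (1 : ℝ)) (Pi.single (0 : Fin (n + 1)) (1 : ℝ)) * hcs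
    rcases mul_eq_zero.mp hkey with h | h
    · exact absurd (pow_eq_zero_iff (two_ne_zero) |>.mp h) hsne
    · linarith
  refine ⟨B (Pi.single (1 : Fin (n + 1)) 1) (Pi.single (1 : Fin (n + 1)) 1), fun x y => ?_⟩
  set cst := B (Pi.single (1 : Fin (n + 1)) 1) (Pi.single (1 : Fin (n + 1)) 1) with hcst
  have hent : ∀ i j : Fin (n + 1), B (Pi.single i 1) (Pi.single j 1)
      = cst * (if i = j then (if i = 0 then (-1 : ℝ) else 1) else 0) := by
    intro i j
    by_cases hij : i = j
    · subst hij
      by_cases hi : i = 0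
      · subst hi
        rw [if_pos rfl, if_pos rfl, hboost]
        ring
      · rw [if_pos rfl, if_neg hi, hspace i 1 hi h10, mul_one]
    · rw [hoff i j hij, if_neg hij, mul_zero]
  have hx : x = ∑ i, x i • (Pi.single i 1 : Fin (n + 1) → ℝ) := by
    simp only [← Pi.single_smul, smul_eq_mul, mul_one]
    exact (Finset.univ_sum_single x).symm
  have hy : y = ∑ j, y j • (Pi.single j 1 : Fin (n + 1) → ℝ) := by
    simp only [← Pi.single_smul, smul_eq_mul, mul_one]
    exact (Finset.univ_sum_single y).symm
  calc B x y = ∑ i, ∑ j, x i * (y j * B (Pi.single i 1) (Pi.single j 1)) := by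
        conv_lhs => rw [hx, hy]
        simp only [map_sum, LinearMap.sum_apply, _root_.map_smul, LinearMap.smul_apply,
          smul_eq_mul]
        rw [Finset.sum_comm]
        refine Finset.sum_congr rfl fun i _ => ?_
        rw [Finset.mul_sum]
        exact Finset.sum_congr rfl fun j _ => by ring
    _ = ∑ i, x i * (y i * (cst * (if i = 0 then (-1 : ℝ) else 1))) := by
        refine Finset.sum_congr rfl fun i _ => ?_
        rw [Finset.sum_eq_single i]
        · rw [hent i i, if_pos rfl]
        · intro j _ hji
          rw [hent i j, if_neg (Ne.symm hji), mul_zero, mul_zero, mul_zero]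
        · intro h; exact absurd (Finset.mem_univ i) h
    _ = cst * minkForm n x y := by
        rw [mink_apply, Finset.mul_sum]
        exact Finset.sum_congr rfl fun i _ => by ring
end
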